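/- arXiv:2512.10017 — 4 statements merged into one kernel-verified Lean document; each statement's English description precedes it below -/
import Mathlib

section
/- Let t be the Thue-Morse sequence and let n ≥ 1 be an odd integer. Suppose x, y, j are nonnegative integers with 0 < j < n, t(n·x) = t(n·y), and t(n·x + j) ≠ t(n·y + j). Then there exist a nonnegative integer m and an integer z with 0 ≤ z < 2^m such that t(n·(x·2^m + z)) ≠ t(n·(y·2^m + z)). -/
/-!
Choose `m` with `n ≤ 2 ^ m` and `z = ⌈j 2^m / n⌉`, so that `n z = j 2^m + r` with `r < 2^m`.
Then the binary expansion of `n (x 2^m + z) = (n x + j) 2^m + r` is that of `n x + j` followed by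
the `m` digits of `r`, and likewise for `y`; appending the same digits preserves the inequality
`t(n x + j) ≠ t(n y + j)`.
-/

/-- The Thue-Morse sequence: number of 1s in the binary expansion, mod 2. -/
def thueMorse (i : ℕ) : ℕ := (Nat.digits 2 i).count 1 % 2

lemma thueMorse_lt_two (i : ℕ) : thueMorse i < 2 := Nat.mod_lt _ two_pos

lemma thueMorse_mul_two_pow_add {a b m : ℕ} (hb : b < 2 ^ m) :
    thueMorse (a * 2 ^ m + b) = (thueMorse a + thueMorse b) % 2 := by
  rcases Nat.eq_zero_or_pos a with rfl | ha
  · simp [thueMorse]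
  have hdigits := Nat.digits_append_zeroes_append_digits
    (b := 2) (k := m - (Nat.digits 2 b).length) (m := a) (n := b) one_lt_two ha
  rw [Nat.add_sub_cancel' ((Nat.digits_length_le_iff one_lt_two b).2 hb)] at hdigits
  rw [thueMorse, add_comm, mul_comm, ← hdigits]
  simp [thueMorse, List.count_append, Nat.add_mod, List.count_replicate, add_comm]

lemma thueMorse_mul_two_pow_add_ne {a a' b m : ℕ} (hb : b < 2 ^ m)
    (h : thueMorse a ≠ thueMorse a') :
    thueMorse (a * 2 ^ m + b) ≠ thueMorse (a' * 2 ^ m + b) := by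
  rw [thueMorse_mul_two_pow_add hb, thueMorse_mul_two_pow_add hb]
  have := thueMorse_lt_two a
  have := thueMorse_lt_two a'
  have := thueMorse_lt_two b
  omega

lemma exists_mul_eq_mul_add_of_lt_of_le {n N j : ℕ} (hjn : j < n) (hnN : n ≤ N) :
    ∃ z < N, ∃ r < N, n * z = j * N + r := by
  have hdiv := Nat.div_add_mod (j * N + n - 1) n
  have hmod : (j * N + n - 1) % n < n := Nat.mod_lt _ (by omega)
  set z := (j * N + n - 1) / n
  have hz : j * N ≤ n * z ∧ n * z < j * N + n := by omega
  refine ⟨z, ?_, n * z - j * N, by omega, by omega⟩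
  have : n * z < n * N := by nlinarith
  exact Nat.lt_of_mul_lt_mul_left this

theorem thueMorse_distinguishing_suffix_general (n x y j : ℕ)
    (hjn : j < n)
    (hj : thueMorse (n * x + j) ≠ thueMorse (n * y + j)) :
    ∃ m z : ℕ, z < 2 ^ m ∧
      thueMorse (n * (x * 2 ^ m + z)) ≠ thueMorse (n * (y * 2 ^ m + z)) := by
  obtain ⟨m, hm⟩ : ∃ m, n ≤ 2 ^ m := ⟨n, Nat.lt_two_pow_self.le⟩
  obtain ⟨z, hz, r, hr, hnz⟩ := exists_mul_eq_mul_add_of_lt_of_le hjn hm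
  have hexpand (w : ℕ) : n * (w * 2 ^ m + z) = (n * w + j) * 2 ^ m + r := by
    rw [mul_add, ← mul_assoc, hnz]
    ring
  refine ⟨m, z, hz, ?_⟩
  rw [hexpand, hexpand]
  exact thueMorse_mul_two_pow_add_ne hr hj

theorem thueMorse_distinguishing_suffix (n x y j : ℕ)
    (hodd : Odd n) (hn : 1 ≤ n) (hj0 : 0 < j) (hjn : j < n)
    (h0 : thueMorse (n * x) = thueMorse (n * y))
    (hj : thueMorse (n * x + j) ≠ thueMorse (n * y + j)) :
    ∃ m z : ℕ, z < 2 ^ m ∧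
      thueMorse (n * (x * 2 ^ m + z)) ≠ thueMorse (n * (y * 2 ^ m + z)) :=
  thueMorse_distinguishing_suffix_general n x y j hjn hj
end

section
/- Let k ≥ 2, n ≥ 1, and let x, y be equal-length digit words over {0,…,k−1} with [y]_k = n·[x]_k. Define the sequence of prefix differences d_i = [y_{1..i}]_k − n·[x_{1..i}]_k, where w_{1..i} is the length-i prefix (msd-first). Then for every i, 0 ≤ d_i ≤ n−1, and d_{i+1} = k·d_i + y_{i+1} − n·x_{i+1} where x_{i+1}, y_{i+1} are the (i+1)-st digits. -/
/-- The value of a word of base-`k` digits, most significant digit first. -/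
def baseVal (k : ℕ) (w : List ℕ) : ℕ := w.foldl (fun acc d => k * acc + d) 0

lemma baseVal_foldl_init (k : ℕ) (w : List ℕ) (c : ℕ) :
    w.foldl (fun acc d => k * acc + d) c = c * k ^ w.length + baseVal k w := by
  induction w generalizing c with
  | nil => simp [baseVal]
  | cons d t ih =>
    simp only [List.foldl_cons, List.length_cons, baseVal]
    rw [ih (k * c + d)]
    have : t.foldl (fun acc d => k * acc + d) (k * 0 + d) = d * k ^ t.length + baseVal k t := by
      rw [ih]; ring_nf
    rw [this]; ring

lemma baseVal_append (k : ℕ) (a b : List ℕ) :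
    baseVal k (a ++ b) = baseVal k a * k ^ b.length + baseVal k b := by
  simp only [baseVal, List.foldl_append]
  rw [baseVal_foldl_init]
  rfl

lemma baseVal_lt (k : ℕ) (hk : 1 ≤ k) (w : List ℕ) (hw : ∀ d ∈ w, d < k) :
    baseVal k w < k ^ w.length := by
  induction w with
  | nil => simp [baseVal]
  | cons d t ih =>
    have hcons : baseVal k (d :: t) = d * k ^ t.length + baseVal k t := by
      simp only [baseVal, List.foldl_cons]
      rw [baseVal_foldl_init]; ring_nf; rfl
    have hd : d < k := hw d (by simp)
    have ht : baseVal k t < k ^ t.length := ih (fun e he => hw e (by simp [he]))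
    rw [hcons, List.length_cons, pow_succ]
    calc d * k ^ t.length + baseVal k t < d * k ^ t.length + k ^ t.length := by omega
      _ = (d + 1) * k ^ t.length := by ring
      _ ≤ k * k ^ t.length := by
          exact Nat.mul_le_mul_right _ (by omega)
      _ = k ^ t.length * k := by ring

theorem prefix_difference_invariant (k n : ℕ) (hk : 2 ≤ k) (hn : 1 ≤ n)
    (x y : List ℕ) (hlen : x.length = y.length)
    (hx : ∀ d ∈ x, d < k) (hy : ∀ d ∈ y, d < k)
    (hval : (baseVal k y : ℤ) = n * baseVal k x) :
    (∀ i ≤ x.length,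
      0 ≤ (baseVal k (y.take i) : ℤ) - n * baseVal k (x.take i) ∧
      (baseVal k (y.take i) : ℤ) - n * baseVal k (x.take i) ≤ (n : ℤ) - 1) ∧
    (∀ i < x.length,
      (baseVal k (y.take (i + 1)) : ℤ) - n * baseVal k (x.take (i + 1)) =
        k * ((baseVal k (y.take i) : ℤ) - n * baseVal k (x.take i)) +
          (y.getD i 0 : ℤ) - n * (x.getD i 0 : ℤ)) := by
  constructor
  · intro i hi
    have hlb : (x.drop i).length = (y.drop i).length := by simp [hlen]
    set m := (x.drop i).length with hm
    have hxv : (baseVal k x : ℤ) =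
        baseVal k (x.take i) * (k : ℤ) ^ m + baseVal k (x.drop i) := by
      have := baseVal_append k (x.take i) (x.drop i)
      rw [List.take_append_drop] at this
      exact_mod_cast this
    have hyv : (baseVal k y : ℤ) =
        baseVal k (y.take i) * (k : ℤ) ^ m + baseVal k (y.drop i) := by
      have := baseVal_append k (y.take i) (y.drop i)
      rw [List.take_append_drop] at this
      rw [hlb]
      exact_mod_cast this
    have key : ((baseVal k (y.take i) : ℤ) - n * baseVal k (x.take i)) * (k : ℤ) ^ m
        = n * baseVal k (x.drop i) - baseVal k (y.drop i) := by
      have := hval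
      rw [hxv, hyv] at this
      linarith [this]
    have hxd : (baseVal k (x.drop i) : ℤ) < (k : ℤ) ^ m := by
      exact_mod_cast baseVal_lt k (by omega) (x.drop i)
        (fun d hd => hx d (List.mem_of_mem_drop hd))
    have hyd : (baseVal k (y.drop i) : ℤ) < (k : ℤ) ^ m := by
      rw [hlb]
      exact_mod_cast baseVal_lt k (by omega) (y.drop i)
        (fun d hd => hy d (List.mem_of_mem_drop hd))
    have hM : (0 : ℤ) < (k : ℤ) ^ m := by positivity
    have hxd0 : (0 : ℤ) ≤ baseVal k (x.drop i) := by positivity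
    have hyd0 : (0 : ℤ) ≤ baseVal k (y.drop i) := by positivity
    have hn' : (1 : ℤ) ≤ n := by exact_mod_cast hn
    set d : ℤ := (baseVal k (y.take i) : ℤ) - n * baseVal k (x.take i) with hd
    constructor
    · nlinarith [key, hyd, hM]
    · nlinarith [key, hxd, hM, hn', hyd0]
  · intro i hi
    have hiy : i < y.length := hlen ▸ hi
    have htx : x.take (i + 1) = x.take i ++ [x.getD i 0] := by
      rw [List.take_succ]
      congr 1
      simp [List.getElem?_eq_getElem hi, List.getD_eq_getElem _ _ hi]
    have hty : y.take (i + 1) = y.take i ++ [y.getD i 0] := by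
      rw [List.take_succ]
      congr 1
      simp [List.getElem?_eq_getElem hiy, List.getD_eq_getElem _ _ hiy]
    have hbv : ∀ (w : List ℕ) (e : ℕ), baseVal k (w ++ [e]) = k * baseVal k w + e := by
      intro w e
      rw [baseVal_append]
      simp [baseVal]
      ring
    rw [htx, hty, hbv, hbv]
    push_cast
    ring
end

section
/- Let k ≥ 2, n ≥ 1, and let h′ : ℕ → Q satisfy h′(k·i + b) = δ(h′(i), b) for all i ≥ 0 and digits b ∈ {0,…,k−1}, where δ : Q × {0,…,k−1} → Q. Define F : ℕ → Q^n by F(i) = (h′(n·i), h′(n·i + 1), …, h′(n·i + n − 1)). Then for every i ≥ 0 and digit a ∈ {0,…,k−1}, the tuple F(k·i + a) is determined by F(i) and a: its d-th component equals δ(F(i)_j, b) where j = ⌊(n·a + d)/k⌋ and b = (n·a + d) mod k, for 0 ≤ d ≤ n−1. -/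
theorem window_transition (k n : ℕ) (hk : 2 ≤ k) (hn : 1 ≤ n)
    {Q : Type*} (δ : Q → ℕ → Q) (h' : ℕ → Q)
    (hrec : ∀ i : ℕ, ∀ b < k, h' (k * i + b) = δ (h' i) b) :
    ∀ i : ℕ, ∀ a < k, ∀ d < n,
      (n * a + d) / k < n ∧ (n * a + d) % k < k ∧
      h' (n * (k * i + a) + d) =
        δ (h' (n * i + (n * a + d) / k)) ((n * a + d) % k) := by
  intro i a ha d hd
  have hk0 : 0 < k := by omega
  have hlt : n * a + d < n * k :=
    calc n * a + d < n * (a + 1) := by nlinarith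
    _ ≤ n * k := Nat.mul_le_mul_left n (by omega)
  refine ⟨Nat.div_lt_of_lt_mul (by rw [Nat.mul_comm k n]; exact hlt), Nat.mod_lt _ hk0, ?_⟩
  have key : n * (k * i + a) + d = k * (n * i + (n * a + d) / k) + (n * a + d) % k := by
    have h1 := Nat.div_add_mod (n * a + d) k
    have h2 : n * (k * i + a) = k * (n * i) + n * a := by ring
    have h3 : k * (n * i + (n * a + d) / k) = k * (n * i) + k * ((n * a + d) / k) := by ring
    omega
  rw [key, hrec _ _ (Nat.mod_lt _ hk0)]
end

section
/- Let h : ℕ → Δ be a k-automatic sequence whose interior sequence h′ has subword complexity ρ_{h′}. For fixed integers n ≥ 1 and 0 ≤ c < n, the number of distinct tuples (h′(n·i), h′(n·i+1), …, h′(n·i+n−1)) over all i ≥ 0 is at most ρ_{h′}(n); consequently the sequence i ↦ h(n·i + c) is generated by a DFAO with at most ρ_{h′}(n) states. -/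
/-- The subword (factor) complexity of an infinite word: the number of
distinct length-`m` contiguous factors. -/
noncomputable def complexity {α : Type*} (x : ℕ → α) (m : ℕ) : ℕ :=
  Set.ncard {w : List α | ∃ i, w = (List.range m).map (fun j => x (i + j))}

/-- A deterministic finite automaton with output, with base-`k` input. -/
structure DFAO (k : ℕ) (Δ : Type*) where
  Q : Type
  fin : Fintype Q
  δ : Q → ℕ → Q
  q₀ : Q
  τ : Q → Δ

/-- `M` generates the sequence `s` if on every msd-first base-`k`
representation of `i` (with any number of leading zeros) it outputs `s i`. -/
def Generates {k : ℕ} {Δ : Type*} (M : DFAO k Δ) (s : ℕ → Δ) : Prop :=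
  ∀ w : List ℕ, (∀ d ∈ w, d < k) → M.τ (w.foldl M.δ M.q₀) = s (baseVal k w)


/-- Auxiliary: the length-`n` factor of `h'` starting at position `m`. -/
def tupAux {Q : Type*} (h' : ℕ → Q) (n m : ℕ) : List Q :=
  (List.range n).map fun j => h' (m + j)

/-- Auxiliary: the transition on factor-lists. -/
def stepAux {Q : Type*} (δ : Q → ℕ → Q) (dflt : Q) (n k b : ℕ) (w : List Q) : List Q :=
  (List.range n).map fun d => δ (w.getD ((n * b + d) / k) dflt) ((n * b + d) % k)

open scoped Classical in
noncomputable def MdAux {Q : Type*} (S : Set (List Q)) (st : ℕ → List Q → List Q)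
    (q0 : S) : S → ℕ → S := fun q b =>
  if hm : st b q.1 ∈ S then ⟨st b q.1, hm⟩ else q0

lemma stepAux_key {Q : Type*} (δ : Q → ℕ → Q) (h' : ℕ → Q) (n k : ℕ)
    (hk0 : 0 < k) (hn : 1 ≤ n)
    (hrec : ∀ i : ℕ, ∀ b < k, h' (k * i + b) = δ (h' i) b)
    (b : ℕ) (hb : b < k) (i : ℕ) :
    stepAux δ (h' 0) n k b (tupAux h' n (n * i)) = tupAux h' n (n * (k * i + b)) := by
  apply List.ext_getElem (by simp [stepAux, tupAux])
  intro d hd1 hd2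
  have hd : d < n := by simpa [stepAux] using hd1
  simp only [stepAux, tupAux, List.getElem_map, List.getElem_range]
  have hq : (n * b + d) / k < n := by
    apply Nat.div_lt_of_lt_mul
    have h1 : n * b + d < n * (b + 1) := by rw [Nat.mul_add]; omega
    have h2 : n * (b + 1) ≤ n * k := Nat.mul_le_mul_left n (by omega)
    have h3 : n * k = k * n := Nat.mul_comm n k
    omega
  rw [List.getD_eq_getElem _ _ (by simpa using hq)]
  simp only [List.getElem_map, List.getElem_range]
  rw [← hrec _ _ (Nat.mod_lt _ hk0)]
  congr 1
  have := Nat.div_add_mod (n * b + d) k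
  ring_nf
  omega

theorem linear_subsequence_state_complexity (k n c : ℕ)
    (hk : 2 ≤ k) (hn : 1 ≤ n) (hc : c < n)
    {Q Δ : Type} [Fintype Q] (δ : Q → ℕ → Q) (h' : ℕ → Q) (τ : Q → Δ)
    (h : ℕ → Δ)
    (hrec : ∀ i : ℕ, ∀ b < k, h' (k * i + b) = δ (h' i) b)
    (hout : ∀ i, h i = τ (h' i)) :
    Set.ncard {v : List Q | ∃ i, v = (List.range n).map (fun d => h' (n * i + d))}
      ≤ complexity h' n ∧
    ∃ M : DFAO k Δ, @Fintype.card M.Q M.fin ≤ complexity h' n ∧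
      Generates M (fun i => h (n * i + c)) := by
  classical
  have hk0 : 0 < k := by omega
  set S : Set (List Q) := {w : List Q | ∃ i, w = (List.range n).map (fun j => h' (i + j))}
    with hS
  have hSfin : S.Finite := by
    apply (List.finite_length_eq Q n).subset
    rintro w ⟨i, rfl⟩
    simp
  have htupS : ∀ m, tupAux h' n m ∈ S := fun m => ⟨m, rfl⟩
  have hcompl : complexity h' n = S.ncard := rfl
  constructor
  · rw [hcompl]
    apply Set.ncard_le_ncard _ hSfin
    rintro v ⟨i, rfl⟩
    exact ⟨n * i, rfl⟩
  · haveI : Fintype S := hSfin.fintype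
    have hcard : Fintype.card S = complexity h' n := by
      rw [hcompl, Set.ncard_eq_toFinset_card', Set.toFinset_card]
    have hstepkey := stepAux_key δ h' n k hk0 hn hrec
    set q0 : S := ⟨tupAux h' n 0, htupS 0⟩ with hq0
    set Md := MdAux S (stepAux δ (h' 0) n k) q0 with hMd
    refine ⟨⟨S, inferInstance, Md, q0, fun q => τ (q.1.getD c (h' 0))⟩, le_of_eq hcard, ?_⟩
    intro w hw
    have key : w.foldl Md q0 = ⟨tupAux h' n (n * baseVal k w), htupS _⟩ := by
      induction w using List.reverseRecOn with
      | nil =>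
        simp only [List.foldl_nil]
        rfl
      | append_singleton w b ih =>
        have hb : b < k := hw b (by simp)
        have hw' : ∀ d ∈ w, d < k := fun d hd => hw d (by simp [hd])
        rw [List.foldl_append, ih hw']
        simp only [List.foldl_cons, List.foldl_nil]
        have hbv : baseVal k (w ++ [b]) = k * baseVal k w + b := by simp [baseVal]
        have hMem : stepAux δ (h' 0) n k b (tupAux h' n (n * baseVal k w)) ∈ S := by
          rw [hstepkey b hb]; exact htupS _
        have heq : Md ⟨tupAux h' n (n * baseVal k w), htupS _⟩ b
            = ⟨stepAux δ (h' 0) n k b (tupAux h' n (n * baseVal k w)), hMem⟩ := by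
          simp only [hMd, MdAux, dif_pos hMem]
        rw [hbv, heq]
        exact Subtype.ext (hstepkey b hb (baseVal k w))
    rw [key]
    show τ ((tupAux h' n (n * baseVal k w)).getD c (h' 0)) = _
    have hgd : (tupAux h' n (n * baseVal k w)).getD c (h' 0)
        = h' (n * baseVal k w + c) := by
      simp only [tupAux]
      rw [List.getD_eq_getElem _ _ (by simpa using hc)]
      simp
    rw [hgd, ← hout]
end
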